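/- For every complex number q with 0 < |q| < 1, ∏_{j≥1} (1 − q^{2j})² / (1 − q^{j}) = Σ_{n∈ℤ} q^{2n² − n}, where the series on the right-hand side converges absolutely. (This is the ℓ = 1 case of the A_ℓ multisum identity and is a classical identity of Gauss, arising from the principal specialization of the character of the level-1 basic representation of the affine Lie algebra A_1^{(1)}.) -/

import Mathlib

/-!
Gauss's identity is the Jacobi triple product
`∏ (1 - q^{2n+2}) (1 + z q^{2n+1}) (1 + z⁻¹ q^{2n+1}) = ∑_{n ∈ ℤ} z^n q^{n²}`
at `(q, z) ↦ (q², q⁻¹)`, once `∏ (1 - q^{2j+2}) (1 + q^{j+1})` is regrouped by the residue of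
`j` modulo `4`. The triple product is the limit of its finite form: the `q`-binomial theorem with
base `q²` and `x = z q^{1-2N}` expands `∏_{k<N} (1 + z q^{2k+1}) (1 + z⁻¹ q^{2k+1})` as
`∑_{|m| ≤ N} [2N, N+m]_{q²} z^m q^{m²}`. After multiplying by `(q²;q²)_{2N}`, the coefficient of
`z^m q^{m²}` is a product of two tails of `∏ (1 - q^{2i+2})`; these tend to `1` and stay uniformly
bounded, so Tannery's theorem passes to the limit `N → ∞`.
-/

open Finset Filter Topology

namespace Nat

lemma choose_two_succ (n : ℕ) : (n + 1).choose 2 = n.choose 2 + n := by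
  simp [choose_succ_succ', add_comm]

lemma two_mul_choose_two_add_self (n : ℕ) : 2 * n.choose 2 + n = n ^ 2 := by
  induction n with
  | zero => rfl
  | succ n ih => rw [choose_two_succ]; linarith

end Nat

lemma sum_range_two_mul_add_one (N : ℕ) : ∑ k ∈ range N, (2 * k + 1) = N ^ 2 := by
  induction N with
  | zero => rfl
  | succ N ih => rw [sum_range_succ, ih]; ring

lemma sum_Icc_neg_eq_sum_range {M : Type*} [AddCommMonoid M] (f : ℤ → M) (N : ℕ) :
    ∑ m ∈ Icc (-N : ℤ) N, f m = ∑ n ∈ range (2 * N + 1), f (n - N) := by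
  symm
  refine sum_nbij' (fun n => (n : ℤ) - N) (fun m => (N + m).toNat) ?_ ?_ ?_ ?_ ?_ <;>
    intro n hn <;> simp only [mem_range, mem_Icc] at hn ⊢ <;> omega

section GaussianBinomial

variable {R : Type*} [CommSemiring R] (B : R)

def gaussBinom : ℕ → ℕ → R
  | _, 0 => 1
  | 0, _ + 1 => 0
  | M + 1, n + 1 => B ^ (n + 1) * gaussBinom M (n + 1) + gaussBinom M n

@[simp] lemma gaussBinom_zero_right (M : ℕ) : gaussBinom B M 0 = 1 := by cases M <;> rfl

lemma gaussBinom_succ_succ (M n : ℕ) :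
    gaussBinom B (M + 1) (n + 1) = B ^ (n + 1) * gaussBinom B M (n + 1) + gaussBinom B M n :=
  rfl

lemma gaussBinom_eq_zero_of_lt {M n : ℕ} (h : M < n) : gaussBinom B M n = 0 := by
  induction M generalizing n with
  | zero => obtain ⟨n, rfl⟩ := Nat.exists_eq_succ_of_ne_zero h.ne'; rfl
  | succ M ih =>
    obtain ⟨n, rfl⟩ := Nat.exists_eq_succ_of_ne_zero (by omega : n ≠ 0)
    rw [gaussBinom_succ_succ, ih (by omega), ih (by omega), mul_zero, add_zero]

@[simp] lemma gaussBinom_self (M : ℕ) : gaussBinom B M M = 1 := by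
  induction M with
  | zero => rfl
  | succ M ih => rw [gaussBinom_succ_succ, gaussBinom_eq_zero_of_lt B M.lt_succ_self, ih]; simp

theorem prod_one_add_mul_pow_eq_sum_gaussBinom (x : R) (M : ℕ) :
    ∏ k ∈ range M, (1 + x * B ^ k) =
      ∑ n ∈ range (M + 1), B ^ n.choose 2 * gaussBinom B M n * x ^ n := by
  induction M generalizing x with
  | zero => simp
  | succ M ih =>
    have hshift (k : ℕ) : 1 + x * B ^ (k + 1) = 1 + x * B * B ^ k := by ring
    rw [prod_range_succ', pow_zero, mul_one]
    simp_rw [hshift]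
    rw [ih]
    set a : ℕ → R := fun n => B ^ n.choose 2 * gaussBinom B M n * (x * B) ^ n with ha
    have hsum : ∑ n ∈ range (M + 1), a n = 1 + ∑ n ∈ range (M + 1), a (n + 1) := by
      rw [sum_range_succ' a, sum_range_succ (fun n => a (n + 1)), ha]
      simp [gaussBinom_eq_zero_of_lt B M.lt_succ_self, add_comm]
    have hterm (n : ℕ) :
        B ^ (n + 1).choose 2 * gaussBinom B (M + 1) (n + 1) * x ^ (n + 1) =
          a (n + 1) + a n * x := by
      simp only [gaussBinom_succ_succ, Nat.choose_two_succ, ha]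
      ring
    rw [sum_range_succ' _ (M + 1), sum_congr rfl fun n _ => hterm n, sum_add_distrib, ← sum_mul,
      hsum]
    simp only [Nat.choose_zero_succ, pow_zero, gaussBinom_zero_right, mul_one]
    ring

end GaussianBinomial

section QPochhammer

variable {R : Type*} [CommRing R] (B : R)

/-- `(B; B)_k` in the notation of `q`-series. -/
def qPochhammer (k : ℕ) : R := ∏ i ∈ range k, (1 - B ^ (i + 1))

@[simp] lemma qPochhammer_zero : qPochhammer B 0 = 1 := prod_range_zero _

lemma qPochhammer_succ (k : ℕ) : qPochhammer B (k + 1) = qPochhammer B k * (1 - B ^ (k + 1)) :=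
  prod_range_succ _ _

lemma qPochhammer_mul_prod_Ico {a b : ℕ} (hab : a ≤ b) :
    qPochhammer B a * ∏ i ∈ Ico a b, (1 - B ^ (i + 1)) = qPochhammer B b :=
  prod_range_mul_prod_Ico _ hab

theorem gaussBinom_add_mul_qPochhammer (m n : ℕ) :
    gaussBinom B (m + n) n * (qPochhammer B m * qPochhammer B n) = qPochhammer B (m + n) := by
  induction n generalizing m with
  | zero => simp
  | succ n ihn =>
    induction m with
    | zero => simp
    | succ m ihm =>
      have ihn' := ihn (m + 1)
      rw [show m + 1 + n = m + (n + 1) by omega] at ihn'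
      rw [show m + 1 + (n + 1) = m + (n + 1) + 1 by omega, gaussBinom_succ_succ]
      simp only [qPochhammer_succ] at ihm ihn' ⊢
      linear_combination (B ^ (n + 1) * (1 - B ^ (m + 1))) * ihm + (1 - B ^ (n + 1)) * ihn'

lemma qPochhammer_mul_gaussBinom {K : Type*} [Field K] (B : K) {m n : ℕ}
    (hm : qPochhammer B m ≠ 0) (hn : qPochhammer B n ≠ 0) :
    qPochhammer B (m + n) * gaussBinom B (m + n) n =
      qPochhammer B (m + n) / qPochhammer B n * (qPochhammer B (m + n) / qPochhammer B m) := by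
  rw [← gaussBinom_add_mul_qPochhammer B m n]
  field_simp

end QPochhammer

section FiniteTripleProduct

variable {K : Type*} [Field K] {q z : K}

lemma sq_pow_choose_two_mul_pow_eq (hq : q ≠ 0) (hz : z ≠ 0) (N n : ℕ) :
    (q ^ 2) ^ n.choose 2 * (z * q / q ^ (2 * N)) ^ n =
      z ^ N / q ^ (N ^ 2) * (z ^ ((n : ℤ) - N) * q ^ (((n : ℤ) - N) ^ 2)) := by
  have hexp : ((n : ℤ) - N) ^ 2 = ((n ^ 2 + N ^ 2 : ℕ) : ℤ) - ((2 * N * n : ℕ) : ℤ) := by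
    push_cast; ring
  rw [hexp, zpow_sub₀ hz, zpow_sub₀ hq, zpow_natCast, zpow_natCast, zpow_natCast, zpow_natCast,
    pow_add, ← Nat.two_mul_choose_two_add_self n, pow_add, pow_mul, div_pow, ← pow_mul]
  field_simp
  ring

theorem finite_jacobi_triple_product (hq : q ≠ 0) (hz : z ≠ 0) (N : ℕ) :
    ∏ k ∈ range N, ((1 + z * q ^ (2 * k + 1)) * (1 + z⁻¹ * q ^ (2 * k + 1))) =
      ∑ m ∈ Icc (-N : ℤ) N, gaussBinom (q ^ 2) (2 * N) (N + m).toNat * (z ^ m * q ^ (m ^ 2)) := by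
  have hbinom := prod_one_add_mul_pow_eq_sum_gaussBinom (q ^ 2) (z * q / q ^ (2 * N)) (2 * N)
  have hlow (k : ℕ) (hk : k < N) : 1 + z * q / q ^ (2 * N) * (q ^ 2) ^ (N - 1 - k) =
      z / q ^ (2 * k + 1) * (1 + z⁻¹ * q ^ (2 * k + 1)) := by
    have e : q ^ (2 * N) = (q ^ 2) ^ (N - 1 - k) * q * q ^ (2 * k + 1) := by
      rw [← pow_mul, ← pow_succ, ← pow_add]; congr 1; omega
    rw [e]; field_simp; ring
  have hhigh (k : ℕ) : 1 + z * q / q ^ (2 * N) * (q ^ 2) ^ (N + k) = 1 + z * q ^ (2 * k + 1) := by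
    rw [← pow_mul, mul_add, pow_add]; field_simp; ring
  have hprefactor : ∏ k ∈ range N, z / q ^ (2 * k + 1) = z ^ N / q ^ (N ^ 2) := by
    rw [prod_div_distrib, prod_const, card_range, prod_pow_eq_pow_sum, sum_range_two_mul_add_one]
  have hterm (n : ℕ) :
      (q ^ 2) ^ n.choose 2 * gaussBinom (q ^ 2) (2 * N) n * (z * q / q ^ (2 * N)) ^ n =
        z ^ N / q ^ (N ^ 2) * (gaussBinom (q ^ 2) (2 * N) (N + ((n : ℤ) - N)).toNat *
          (z ^ ((n : ℤ) - N) * q ^ (((n : ℤ) - N) ^ 2))) := by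
    rw [add_sub_cancel, Int.toNat_natCast, mul_right_comm, sq_pow_choose_two_mul_pow_eq hq hz]
    ring
  rw [two_mul, prod_range_add, ← prod_range_reflect, ← two_mul,
    prod_congr rfl fun k hk => hlow k (mem_range.1 hk), prod_congr rfl fun k _ => hhigh k,
    prod_mul_distrib, hprefactor, sum_congr rfl fun n _ => hterm n, ← mul_sum] at hbinom
  rw [prod_mul_distrib, sum_Icc_neg_eq_sum_range]
  refine mul_left_cancel₀ (div_ne_zero (pow_ne_zero N hz) (pow_ne_zero (N ^ 2) hq)) ?_
  linear_combination hbinom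

end FiniteTripleProduct

section Analytic

variable {q B : ℂ}

lemma summable_pow_mul_pow_sq {a r : ℝ} (ha : 0 ≤ a) (hr0 : 0 ≤ r) (hr : r < 1) :
    Summable fun n : ℕ => a ^ n * r ^ (n ^ 2) := by
  have hsmall : ∀ᶠ n : ℕ in atTop, a * r ^ n ≤ 1 / 2 := by
    have := (tendsto_pow_atTop_nhds_zero_of_lt_one hr0 hr).const_mul a
    rw [mul_zero] at this
    exact this.eventually (ge_mem_nhds (by norm_num))
  refine .of_norm_bounded_eventually_nat summable_geometric_two ?_
  filter_upwards [hsmall] with n hn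
  rw [Real.norm_of_nonneg (by positivity), sq, pow_mul, ← mul_pow]
  exact pow_le_pow_left₀ (by positivity) hn n

lemma summable_norm_zpow_mul_zpow_sq (hq : ‖q‖ < 1) (z : ℂ) :
    Summable fun n : ℤ => ‖z ^ n * q ^ (n ^ 2)‖ := by
  apply Summable.of_nat_of_neg
  · refine (summable_pow_mul_pow_sq (norm_nonneg z) (norm_nonneg q) hq).congr fun n => ?_
    rw [norm_mul, norm_zpow, norm_zpow, zpow_natCast, ← Nat.cast_pow, zpow_natCast]
  · refine (summable_pow_mul_pow_sq (norm_nonneg z⁻¹) (norm_nonneg q) hq).congr fun n => ?_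
    rw [norm_mul, norm_zpow, norm_zpow, neg_sq, zpow_neg, ← inv_zpow, zpow_natCast, norm_inv,
      ← Nat.cast_pow, zpow_natCast]

lemma norm_pow_lt_one (hB : ‖B‖ < 1) {n : ℕ} (hn : n ≠ 0) : ‖B ^ n‖ < 1 := by
  rw [norm_pow]
  exact pow_lt_one₀ (norm_nonneg B) hB hn

lemma one_sub_pow_ne_zero (hB : ‖B‖ < 1) {n : ℕ} (hn : n ≠ 0) : 1 - B ^ n ≠ 0 := by
  rw [sub_ne_zero]
  intro h
  simpa [← h] using norm_pow_lt_one hB hn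

lemma multipliable_one_add_mul_pow (a : ℂ) (hB : ‖B‖ < 1) :
    Multipliable fun n : ℕ => 1 + a * B ^ n :=
  multipliable_one_add_of_summable <| by
    simpa using (summable_geometric_of_lt_one (norm_nonneg B) hB).mul_left ‖a‖

lemma summable_pow_succ {r : ℝ} (hr0 : 0 ≤ r) (hr : r < 1) : Summable fun i : ℕ => r ^ (i + 1) := by
  simpa [pow_succ] using (summable_geometric_of_lt_one hr0 hr).mul_right r

lemma qPochhammer_ne_zero (hB : ‖B‖ < 1) (k : ℕ) : qPochhammer B k ≠ 0 :=
  prod_ne_zero_iff.2 fun _ _ => one_sub_pow_ne_zero hB (Nat.succ_ne_zero _)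

lemma tprod_one_sub_pow_succ_ne_zero (hB : ‖B‖ < 1) : ∏' i : ℕ, (1 - B ^ (i + 1)) ≠ 0 := by
  simp_rw [sub_eq_add_neg]
  refine tprod_one_add_ne_zero_of_summable (fun i => ?_) ?_
  · rw [← sub_eq_add_neg]
    exact one_sub_pow_ne_zero hB (Nat.succ_ne_zero i)
  · simpa using summable_pow_succ (norm_nonneg B) hB

lemma tendsto_qPochhammer_div (hB : ‖B‖ < 1) {a b : ℕ → ℕ} (ha : Tendsto a atTop atTop)
    (hb : Tendsto b atTop atTop) :
    Tendsto (fun N => qPochhammer B (a N) / qPochhammer B (b N)) atTop (𝓝 1) := by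
  have hlim : Tendsto (qPochhammer B) atTop (𝓝 (∏' i : ℕ, (1 - B ^ (i + 1)))) :=
    (ModularForm.multipliable_one_sub_pow hB).hasProd.tendsto_prod_nat
  have h := (hlim.comp ha).div (hlim.comp hb) (tprod_one_sub_pow_succ_ne_zero hB)
  rwa [div_self (tprod_one_sub_pow_succ_ne_zero hB)] at h

lemma norm_qPochhammer_div_le (hB : ‖B‖ < 1) {a b : ℕ} (hab : a ≤ b) :
    ‖qPochhammer B b / qPochhammer B a‖ ≤ Real.exp (∑' i : ℕ, ‖B‖ ^ (i + 1)) := by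
  rw [← qPochhammer_mul_prod_Ico B hab, mul_div_cancel_left₀ _ (qPochhammer_ne_zero hB a)]
  calc ‖∏ i ∈ Ico a b, (1 - B ^ (i + 1))‖ ≤ ∏ i ∈ Ico a b, (1 + ‖B‖ ^ (i + 1)) :=
        (Finset.norm_prod_le _ _).trans <| prod_le_prod (fun _ _ => norm_nonneg _) fun i _ =>
          (norm_sub_le _ _).trans (by simp)
    _ ≤ Real.exp (∑ i ∈ Ico a b, ‖B‖ ^ (i + 1)) :=
        Real.prod_one_add_le_exp_sum _ fun _ => by positivity
    _ ≤ Real.exp (∑' i : ℕ, ‖B‖ ^ (i + 1)) :=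
        Real.exp_le_exp.2 <|
          (summable_pow_succ (norm_nonneg B) hB).sum_le_tsum _ fun _ _ => by positivity

end Analytic

section TripleProduct

/-- For `|m| ≤ N` this is `(B; B)_{2N} [2N, N+m]_B`, written as a product of two ratios that both
tend to `1`. -/
def jacobiWeight {K : Type*} [Field K] (B : K) (N : ℕ) (m : ℤ) : K :=
  if m.natAbs ≤ N then
    qPochhammer B (2 * N) / qPochhammer B ((N : ℤ) + m).toNat *
      (qPochhammer B (2 * N) / qPochhammer B ((N : ℤ) - m).toNat)
  else 0

variable {q z B : ℂ}

lemma qPochhammer_mul_gaussBinom_eq_jacobiWeight (hB : ‖B‖ < 1) {N : ℕ} {m : ℤ}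
    (hm : m.natAbs ≤ N) :
    qPochhammer B (2 * N) * gaussBinom B (2 * N) ((N : ℤ) + m).toNat = jacobiWeight B N m := by
  rw [jacobiWeight, if_pos hm, show 2 * N = ((N : ℤ) - m).toNat + ((N : ℤ) + m).toNat by omega]
  exact qPochhammer_mul_gaussBinom B (qPochhammer_ne_zero hB _) (qPochhammer_ne_zero hB _)

lemma tendsto_toNat_add_atTop (m : ℤ) :
    Tendsto (fun N : ℕ => ((N : ℤ) + m).toNat) atTop atTop :=
  tendsto_atTop_mono (fun N => by omega) (tendsto_sub_atTop_nat m.natAbs)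

lemma tendsto_jacobiWeight (hB : ‖B‖ < 1) (m : ℤ) :
    Tendsto (fun N => jacobiWeight B N m) atTop (𝓝 1) := by
  have h2N : Tendsto (fun N : ℕ => 2 * N) atTop atTop := tendsto_id.const_mul_atTop' two_pos
  have hplus := tendsto_qPochhammer_div hB h2N (tendsto_toNat_add_atTop m)
  have hminus := tendsto_qPochhammer_div hB h2N (tendsto_toNat_add_atTop (-m))
  rw [← one_mul 1]
  refine (hplus.mul hminus).congr' ?_
  filter_upwards [eventually_ge_atTop m.natAbs] with N hN
  rw [jacobiWeight, if_pos hN, sub_eq_add_neg]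

lemma norm_jacobiWeight_le (hB : ‖B‖ < 1) (N : ℕ) (m : ℤ) :
    ‖jacobiWeight B N m‖ ≤ Real.exp (∑' i : ℕ, ‖B‖ ^ (i + 1)) ^ 2 := by
  rw [jacobiWeight]
  split_ifs with hm
  · rw [norm_mul, sq]
    exact mul_le_mul (norm_qPochhammer_div_le hB (by omega))
      (norm_qPochhammer_div_le hB (by omega)) (norm_nonneg _) (Real.exp_nonneg _)
  · rw [norm_zero]
    positivity

lemma tendsto_tsum_mul_jacobiWeight (hB : ‖B‖ < 1) {a : ℤ → ℂ} (ha : Summable fun m => ‖a m‖) :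
    Tendsto (fun N => ∑' m : ℤ, a m * jacobiWeight B N m) atTop (𝓝 (∑' m : ℤ, a m)) := by
  refine tendsto_tsum_of_dominated_convergence
    (ha.mul_right (Real.exp (∑' i : ℕ, ‖B‖ ^ (i + 1)) ^ 2)) (fun m => ?_) (.of_forall fun N m => ?_)
  · simpa using (tendsto_jacobiWeight hB m).const_mul (a m)
  · rw [norm_mul]
    exact mul_le_mul_of_nonneg_left (norm_jacobiWeight_le hB N m) (norm_nonneg _)

lemma tsum_mul_jacobiWeight (hq : ‖q‖ < 1) (hq0 : q ≠ 0) (hz : z ≠ 0) (N : ℕ) :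
    ∑' m : ℤ, z ^ m * q ^ (m ^ 2) * jacobiWeight (q ^ 2) N m =
      qPochhammer (q ^ 2) (2 * N) *
        ∏ k ∈ range N, ((1 + z * q ^ (2 * k + 1)) * (1 + z⁻¹ * q ^ (2 * k + 1))) := by
  have hB : ‖q ^ 2‖ < 1 := norm_pow_lt_one hq two_ne_zero
  rw [tsum_eq_sum (s := Icc (-N : ℤ) N) fun m hm => ?_, finite_jacobi_triple_product hq0 hz,
    mul_sum]
  · refine sum_congr rfl fun m hm => ?_
    rw [← qPochhammer_mul_gaussBinom_eq_jacobiWeight hB (by rw [mem_Icc] at hm; omega)]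
    ring
  · rw [jacobiWeight, if_neg (by rw [mem_Icc] at hm; omega), mul_zero]

theorem hasProd_jacobi_triple_product (hq : ‖q‖ < 1) (hq0 : q ≠ 0) (hz : z ≠ 0) :
    HasProd (fun n : ℕ => (1 - q ^ (2 * n + 2)) * (1 + z * q ^ (2 * n + 1)) *
      (1 + z⁻¹ * q ^ (2 * n + 1))) (∑' n : ℤ, z ^ n * q ^ (n ^ 2)) := by
  have hB : ‖q ^ 2‖ < 1 := norm_pow_lt_one hq two_ne_zero
  have hmultipliable : Multipliable fun n : ℕ => (1 - q ^ (2 * n + 2)) *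
      (1 + z * q ^ (2 * n + 1)) * (1 + z⁻¹ * q ^ (2 * n + 1)) :=
    (((multipliable_one_add_mul_pow (-q ^ 2) hB).mul (multipliable_one_add_mul_pow (z * q) hB)).mul
      (multipliable_one_add_mul_pow (z⁻¹ * q) hB)).congr fun n => by ring
  have hpartial (N : ℕ) : ∏ n ∈ range N, (1 - q ^ (2 * n + 2)) * (1 + z * q ^ (2 * n + 1)) *
      (1 + z⁻¹ * q ^ (2 * n + 1)) = (∑' m : ℤ, z ^ m * q ^ (m ^ 2) * jacobiWeight (q ^ 2) N m) *
        (qPochhammer (q ^ 2) N / qPochhammer (q ^ 2) (2 * N)) := by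
    have hP : qPochhammer (q ^ 2) N = ∏ n ∈ range N, (1 - q ^ (2 * n + 2)) :=
      prod_congr rfl fun n _ => by rw [← pow_mul, mul_add, mul_one]
    have hP2N := qPochhammer_ne_zero hB (2 * N)
    rw [tsum_mul_jacobiWeight hq hq0 hz, prod_congr rfl fun n _ => mul_assoc _ _ _,
      prod_mul_distrib, ← hP]
    field_simp
  have hlim := ((tendsto_tsum_mul_jacobiWeight hB (summable_norm_zpow_mul_zpow_sq hq z)).mul
    (tendsto_qPochhammer_div hB tendsto_id (tendsto_id.const_mul_atTop' two_pos))).congr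
      fun N => (hpartial N).symm
  rw [mul_one] at hlim
  exact tendsto_nhds_unique hmultipliable.hasProd.tendsto_prod_nat hlim ▸ hmultipliable.hasProd

end TripleProduct

section Regrouping

variable {q : ℂ}

lemma multipliable_one_add_mul_pow_mul_add (hq : ‖q‖ < 1) (a : ℂ) {c : ℕ} (hc : c ≠ 0) (d : ℕ) :
    Multipliable fun n : ℕ => 1 + a * q ^ (c * n + d) :=
  (multipliable_one_add_mul_pow (a * q ^ d) (norm_pow_lt_one hq hc)).congr fun n => by ring

lemma tprod_one_add_pow_two_mul_add_one (hq : ‖q‖ < 1) :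
    ∏' k : ℕ, (1 + q ^ (2 * k + 1)) =
      (∏' k : ℕ, (1 + q ^ (4 * k + 1))) * ∏' k : ℕ, (1 + q ^ (4 * k + 3)) := by
  rw [← tprod_even_mul_odd (f := fun k : ℕ => 1 + q ^ (2 * k + 1))
    ((multipliable_one_add_mul_pow_mul_add hq 1 four_ne_zero 1).congr fun k => by ring)
    ((multipliable_one_add_mul_pow_mul_add hq 1 four_ne_zero 3).congr fun k => by ring)]
  congr 1 <;> exact tprod_congr fun k => by ring

lemma tprod_one_sub_pow_mul_one_add_pow (hq : ‖q‖ < 1) :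
    ∏' j : ℕ, (1 - q ^ (2 * j + 2)) * (1 + q ^ (j + 1)) =
      ∏' n : ℕ, (1 - q ^ (4 * n + 4)) * (1 + q ^ (4 * n + 1)) * (1 + q ^ (4 * n + 3)) := by
  have hmul := multipliable_one_add_mul_pow_mul_add hq
  have hsq : Multipliable fun j : ℕ => 1 - q ^ (2 * j + 2) :=
    (hmul (-1) two_ne_zero 2).congr fun j => by ring
  have hsq4 : Multipliable fun n : ℕ => 1 - q ^ (4 * n + 4) :=
    (hmul (-1) four_ne_zero 4).congr fun j => by ring
  have heven : Multipliable fun k : ℕ => 1 + q ^ (2 * k + 1 + 1) :=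
    (hmul 1 two_ne_zero 2).congr fun j => by ring
  calc ∏' j : ℕ, (1 - q ^ (2 * j + 2)) * (1 + q ^ (j + 1))
      = (∏' j : ℕ, (1 - q ^ (2 * j + 2))) * ∏' j : ℕ, (1 + q ^ (j + 1)) :=
        hsq.tprod_mul <| (hmul 1 one_ne_zero 1).congr fun j => by ring
    _ = (∏' k : ℕ, (1 - q ^ (2 * k + 2))) *
          ((∏' k : ℕ, (1 + q ^ (2 * k + 1))) * ∏' k : ℕ, (1 + q ^ (2 * k + 1 + 1))) := by
      rw [tprod_even_mul_odd (f := fun j : ℕ => 1 + q ^ (j + 1))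
        ((hmul 1 two_ne_zero 1).congr fun j => by ring) heven]
    _ = (∏' k : ℕ, (1 - q ^ (2 * k + 2)) * (1 + q ^ (2 * k + 1 + 1))) *
          ∏' k : ℕ, (1 + q ^ (2 * k + 1)) := by
      rw [hsq.tprod_mul heven]; ring
    _ = (∏' n : ℕ, (1 - q ^ (4 * n + 4))) *
          ((∏' n : ℕ, (1 + q ^ (4 * n + 1))) * ∏' n : ℕ, (1 + q ^ (4 * n + 3))) := by
      rw [tprod_one_add_pow_two_mul_add_one hq]; congr 1; exact tprod_congr fun k => by ring
    _ = ∏' n : ℕ, (1 - q ^ (4 * n + 4)) * (1 + q ^ (4 * n + 1)) * (1 + q ^ (4 * n + 3)) := by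
      have h1 : Multipliable fun n : ℕ => 1 + q ^ (4 * n + 1) :=
        (hmul 1 four_ne_zero 1).congr fun n => by ring
      have h3 : Multipliable fun n : ℕ => 1 + q ^ (4 * n + 3) :=
        (hmul 1 four_ne_zero 3).congr fun n => by ring
      rw [(hsq4.mul h1).tprod_mul h3, hsq4.tprod_mul h1, mul_assoc]

end Regrouping

/-- Gauss's identity: For every complex `q` with `0 < |q| < 1`,
`∏_{j≥1} (1 − q^{2j})²/(1 − q^j) = Σ_{n∈ℤ} q^{2n² − n}`, where the series on the
right converges absolutely. -/
theorem stmt_8 :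
    ∀ (q : ℂ), 0 < ‖q‖ → ‖q‖ < 1 →
      Summable (fun n : ℤ => ‖q ^ (2 * n ^ 2 - n)‖) ∧
      (∏' j : ℕ, (1 - q ^ (2 * (j + 1))) ^ 2 / (1 - q ^ (j + 1)))
        = ∑' n : ℤ, q ^ (2 * n ^ 2 - n) := by
  intro q hq_pos hq
  have hq0 : q ≠ 0 := norm_pos_iff.1 hq_pos
  have hq2 : ‖q ^ 2‖ < 1 := norm_pow_lt_one hq two_ne_zero
  have hterm (n : ℤ) : q⁻¹ ^ n * (q ^ 2) ^ (n ^ 2) = q ^ (2 * n ^ 2 - n) := by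
    rw [inv_zpow', ← zpow_natCast q 2, ← zpow_mul, ← zpow_add₀ hq0]
    congr 1; push_cast; ring
  refine ⟨(summable_norm_zpow_mul_zpow_sq hq2 q⁻¹).congr fun n => by rw [hterm], ?_⟩
  calc ∏' j : ℕ, (1 - q ^ (2 * (j + 1))) ^ 2 / (1 - q ^ (j + 1))
      = ∏' j : ℕ, (1 - q ^ (2 * j + 2)) * (1 + q ^ (j + 1)) := tprod_congr fun j => by
        have := one_sub_pow_ne_zero hq (Nat.succ_ne_zero j)
        field_simp
        ring
    _ = ∏' n : ℕ, (1 - q ^ (4 * n + 4)) * (1 + q ^ (4 * n + 1)) * (1 + q ^ (4 * n + 3)) :=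
        tprod_one_sub_pow_mul_one_add_pow hq
    _ = ∏' n : ℕ, (1 - (q ^ 2) ^ (2 * n + 2)) * (1 + q⁻¹ * (q ^ 2) ^ (2 * n + 1)) *
          (1 + q⁻¹⁻¹ * (q ^ 2) ^ (2 * n + 1)) := tprod_congr fun n => by
        field_simp
        ring
    _ = ∑' n : ℤ, q⁻¹ ^ n * (q ^ 2) ^ (n ^ 2) :=
        (hasProd_jacobi_triple_product hq2 (pow_ne_zero 2 hq0) (inv_ne_zero hq0)).tprod_eq
    _ = ∑' n : ℤ, q ^ (2 * n ^ 2 - n) := tsum_congr hterm
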